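/- arXiv:2601.07993 — 4 statements merged into one kernel-verified Lean document; each statement's English description precedes it below -/
import Mathlib

section
/- Let B be the ordinal sum of copulas B_1,…,B_n with respect to pairwise disjoint open subintervals (a_1,b_1),…,(a_n,b_n) of [0,1]. Then Spearman's rho of B satisfies ρ(B) = 1 − Σ_{k=1}^n (b_k − a_k)³ · (1 − ρ(B_k)). -/
open MeasureTheory Set

/-- A bivariate copula, viewed as a real function of two variables whose defining
properties are required on the unit square. -/
def IsCopula (C : ℝ → ℝ → ℝ) : Prop :=
  (∀ v ∈ Icc (0:ℝ) 1, C 0 v = 0) ∧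
  (∀ u ∈ Icc (0:ℝ) 1, C u 0 = 0) ∧
  (∀ u ∈ Icc (0:ℝ) 1, C u 1 = u) ∧
  (∀ v ∈ Icc (0:ℝ) 1, C 1 v = v) ∧
  (∀ u₁ u₂ v₁ v₂ : ℝ, 0 ≤ u₁ → u₁ ≤ u₂ → u₂ ≤ 1 → 0 ≤ v₁ → v₁ ≤ v₂ → v₂ ≤ 1 →
    0 ≤ C u₂ v₂ - C u₂ v₁ - C u₁ v₂ + C u₁ v₁)

/-- Spearman's rho: ρ(C) = 12·∫₀¹∫₀¹ C(u,v) du dv − 3. -/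
noncomputable def spearmanRho (C : ℝ → ℝ → ℝ) : ℝ :=
  12 * (∫ u in (0:ℝ)..1, ∫ v in (0:ℝ)..1, C u v) - 3

/-- Spearman's footrule: φ(C) = 6·∫₀¹ C(u,u) du − 2. -/
noncomputable def footrule (C : ℝ → ℝ → ℝ) : ℝ :=
  6 * (∫ u in (0:ℝ)..1, C u u) - 2

/-- Gini's gamma: γ(C) = 4·∫₀¹ C(u,u) du + 4·∫₀¹ C(u,1−u) du − 2. -/
noncomputable def giniGamma (C : ℝ → ℝ → ℝ) : ℝ :=
  4 * (∫ u in (0:ℝ)..1, C u u) + 4 * (∫ u in (0:ℝ)..1, C u (1 - u)) - 2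

/-- Blomqvist's beta: β(C) = 4·C(1/2,1/2) − 1. -/
noncomputable def blomqvistBeta (C : ℝ → ℝ → ℝ) : ℝ :=
  4 * C (1/2) (1/2) - 1

/-- A copula measure of a copula `C`: a probability measure on the plane with
μ([0,u]×[0,v]) = C(u,v) for u,v in the unit interval. -/
def IsCopulaMeasure (C : ℝ → ℝ → ℝ) (μ : Measure (ℝ × ℝ)) : Prop :=
  IsProbabilityMeasure μ ∧
  ∀ u ∈ Icc (0:ℝ) 1, ∀ v ∈ Icc (0:ℝ) 1,
    μ (Icc 0 u ×ˢ Icc 0 v) = ENNReal.ofReal (C u v)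

/-- Kendall's tau expressed via a copula measure μ of C:
τ(C) = 4·∫_{[0,1]²} C dμ − 1. -/
noncomputable def kendallTauInt (C : ℝ → ℝ → ℝ) (μ : Measure (ℝ × ℝ)) : ℝ :=
  4 * (∫ p in Icc (0:ℝ) 1 ×ˢ Icc (0:ℝ) 1, C p.1 p.2 ∂μ) - 1

/-- `B` is the ordinal sum of the copulas `Bk k` with respect to the pairwise disjoint
open subintervals `(a k, b k)` of `[0,1]`. -/
def IsOrdinalSum {n : ℕ} (a b : Fin n → ℝ) (Bk : Fin n → ℝ → ℝ → ℝ)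
    (B : ℝ → ℝ → ℝ) : Prop :=
  (∀ k, 0 ≤ a k ∧ a k ≤ b k ∧ b k ≤ 1) ∧
  (Pairwise fun i j => Disjoint (Ioo (a i) (b i)) (Ioo (a j) (b j))) ∧
  (∀ k, ∀ u ∈ Icc (a k) (b k), ∀ v ∈ Icc (a k) (b k),
    B u v = a k + (b k - a k) * Bk k ((u - a k) / (b k - a k)) ((v - a k) / (b k - a k))) ∧
  (∀ u ∈ Icc (0:ℝ) 1, ∀ v ∈ Icc (0:ℝ) 1,
    (∀ k, ¬(u ∈ Icc (a k) (b k) ∧ v ∈ Icc (a k) (b k))) → B u v = min u v)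

/-!
On `[0,1]²` the ordinal sum is `min` plus, for each `k`, a patch supported on `(a_k,b_k)²`, namely
the deviation `B_k − min` rescaled to that square and multiplied by `b_k − a_k`. Rescaling both
variables contributes another factor `(b_k − a_k)²` to the double integral, so
`∫∫ B = ∫∫ min + Σ_k (b_k − a_k)³ (∫∫ B_k − ∫∫ min)` with `∫∫ min = 1/3`, and the formula follows
from `ρ(C) = 12 ∫∫ C − 3`.
-/

noncomputable def unitSquareIntegral (f : ℝ → ℝ → ℝ) : ℝ :=
  ∫ u in (0:ℝ)..1, ∫ v in (0:ℝ)..1, f u v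

lemma spearmanRho_eq_unitSquareIntegral (C : ℝ → ℝ → ℝ) :
    spearmanRho C = 12 * unitSquareIntegral C - 3 := rfl

/-- Copulas are not assumed measurable, so joint integrability on the square is not available;
monotonicity in each variable gives this iterated notion, which is all that linearity of
`unitSquareIntegral` needs. -/
def UnitSquareIntegrable (f : ℝ → ℝ → ℝ) : Prop :=
  (∀ u ∈ Icc (0:ℝ) 1, IntervalIntegrable (f u) volume 0 1) ∧
    IntervalIntegrable (fun u => ∫ v in (0:ℝ)..1, f u v) volume 0 1

lemma mem_Icc_of_mem_uIcc_zero_one {u : ℝ} (hu : u ∈ uIcc (0:ℝ) 1) : u ∈ Icc (0:ℝ) 1 := by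
  rwa [uIcc_of_le zero_le_one] at hu

lemma mem_Icc_of_mem_uIoc_zero_one {u : ℝ} (hu : u ∈ uIoc (0:ℝ) 1) : u ∈ Icc (0:ℝ) 1 :=
  mem_Icc_of_mem_uIcc_zero_one (uIoc_subset_uIcc hu)

lemma unitSquareIntegral_congr {f g : ℝ → ℝ → ℝ}
    (h : ∀ u ∈ Icc (0:ℝ) 1, ∀ v ∈ Icc (0:ℝ) 1, f u v = g u v) :
    unitSquareIntegral f = unitSquareIntegral g :=
  intervalIntegral.integral_congr fun u hu => intervalIntegral.integral_congr fun v hv =>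
    h u (mem_Icc_of_mem_uIcc_zero_one hu) v (mem_Icc_of_mem_uIcc_zero_one hv)

namespace UnitSquareIntegrable

variable {f g : ℝ → ℝ → ℝ}

lemma of_monotoneOn (hright : ∀ u ∈ Icc (0:ℝ) 1, MonotoneOn (f u) (Icc 0 1))
    (hleft : ∀ v ∈ Icc (0:ℝ) 1, MonotoneOn (fun u => f u v) (Icc 0 1)) :
    UnitSquareIntegrable f := by
  have hinner : ∀ u ∈ Icc (0:ℝ) 1, IntervalIntegrable (f u) volume 0 1 := fun u hu =>
    MonotoneOn.intervalIntegrable (by rw [uIcc_of_le zero_le_one]; exact hright u hu)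
  refine ⟨hinner, MonotoneOn.intervalIntegrable ?_⟩
  rw [uIcc_of_le zero_le_one]
  exact fun u₁ hu₁ u₂ hu₂ hle => intervalIntegral.integral_mono_on zero_le_one
    (hinner u₁ hu₁) (hinner u₂ hu₂) fun v hv => hleft v hv hu₁ hu₂ hle

lemma add (hf : UnitSquareIntegrable f) (hg : UnitSquareIntegrable g) :
    UnitSquareIntegrable (fun u v => f u v + g u v) :=
  ⟨fun u hu => (hf.1 u hu).add (hg.1 u hu),
    (hf.2.add hg.2).congr fun u hu => (intervalIntegral.integral_add
      (hf.1 u (mem_Icc_of_mem_uIoc_zero_one hu)) (hg.1 u (mem_Icc_of_mem_uIoc_zero_one hu))).symm⟩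

lemma sub (hf : UnitSquareIntegrable f) (hg : UnitSquareIntegrable g) :
    UnitSquareIntegrable (fun u v => f u v - g u v) :=
  ⟨fun u hu => (hf.1 u hu).sub (hg.1 u hu),
    (hf.2.sub hg.2).congr fun u hu => (intervalIntegral.integral_sub
      (hf.1 u (mem_Icc_of_mem_uIoc_zero_one hu)) (hg.1 u (mem_Icc_of_mem_uIoc_zero_one hu))).symm⟩

lemma sum {ι : Type*} (s : Finset ι) {f : ι → ℝ → ℝ → ℝ}
    (hf : ∀ i ∈ s, UnitSquareIntegrable (f i)) :
    UnitSquareIntegrable (fun u v => ∑ i ∈ s, f i u v) := by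
  refine ⟨fun u hu => ?_, ?_⟩
  · simpa only [Finset.sum_fn] using IntervalIntegrable.sum s fun i hi => (hf i hi).1 u hu
  · refine (IntervalIntegrable.sum s fun i hi => (hf i hi).2).congr fun u hu => ?_
    simp only [Finset.sum_apply]
    exact (intervalIntegral.integral_finsetSum fun i hi =>
      (hf i hi).1 u (mem_Icc_of_mem_uIoc_zero_one hu)).symm

end UnitSquareIntegrable

section Linearity

variable {f g : ℝ → ℝ → ℝ}

lemma unitSquareIntegral_add (hf : UnitSquareIntegrable f) (hg : UnitSquareIntegrable g) :
    unitSquareIntegral (fun u v => f u v + g u v) =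
      unitSquareIntegral f + unitSquareIntegral g := by
  rw [unitSquareIntegral, unitSquareIntegral, unitSquareIntegral,
    ← intervalIntegral.integral_add hf.2 hg.2]
  exact intervalIntegral.integral_congr fun u hu => intervalIntegral.integral_add
    (hf.1 u (mem_Icc_of_mem_uIcc_zero_one hu)) (hg.1 u (mem_Icc_of_mem_uIcc_zero_one hu))

lemma unitSquareIntegral_sub (hf : UnitSquareIntegrable f) (hg : UnitSquareIntegrable g) :
    unitSquareIntegral (fun u v => f u v - g u v) =
      unitSquareIntegral f - unitSquareIntegral g := by
  rw [unitSquareIntegral, unitSquareIntegral, unitSquareIntegral,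
    ← intervalIntegral.integral_sub hf.2 hg.2]
  exact intervalIntegral.integral_congr fun u hu => intervalIntegral.integral_sub
    (hf.1 u (mem_Icc_of_mem_uIcc_zero_one hu)) (hg.1 u (mem_Icc_of_mem_uIcc_zero_one hu))

lemma unitSquareIntegral_sum {ι : Type*} (s : Finset ι) {f : ι → ℝ → ℝ → ℝ}
    (hf : ∀ i ∈ s, UnitSquareIntegrable (f i)) :
    unitSquareIntegral (fun u v => ∑ i ∈ s, f i u v) = ∑ i ∈ s, unitSquareIntegral (f i) := by
  unfold unitSquareIntegral
  rw [← intervalIntegral.integral_finsetSum fun i hi => (hf i hi).2]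
  exact intervalIntegral.integral_congr fun u hu => intervalIntegral.integral_finsetSum
    fun i hi => (hf i hi).1 u (mem_Icc_of_mem_uIcc_zero_one hu)

end Linearity

lemma integral_min_left {u : ℝ} (hu : u ∈ Icc (0:ℝ) 1) :
    ∫ v in (0:ℝ)..1, min u v = u - u ^ 2 / 2 := by
  have hint : ∀ c d : ℝ, IntervalIntegrable (fun v => min u v) volume c d := fun c d =>
    (continuous_const.min continuous_id).intervalIntegrable c d
  rw [← intervalIntegral.integral_add_adjacent_intervals (hint 0 u) (hint u 1),
    intervalIntegral.integral_congr (g := fun v => v) fun v hv =>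
      min_eq_right (by rw [uIcc_of_le hu.1] at hv; exact hv.2),
    intervalIntegral.integral_congr (g := fun _ => u) fun v hv =>
      min_eq_left (by rw [uIcc_of_le hu.2] at hv; exact hv.1)]
  simp only [integral_id, intervalIntegral.integral_const, smul_eq_mul]
  ring

lemma unitSquareIntegral_min : unitSquareIntegral min = 1 / 3 := by
  rw [unitSquareIntegral, intervalIntegral.integral_congr fun u hu =>
    integral_min_left (mem_Icc_of_mem_uIcc_zero_one hu)]
  norm_num [intervalIntegral.integral_sub, intervalIntegral.integral_div]

lemma unitSquareIntegrable_min : UnitSquareIntegrable min :=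
  .of_monotoneOn (fun _ _ => (monotone_const.min monotone_id).monotoneOn _)
    (fun _ _ => (monotone_id.min monotone_const).monotoneOn _)

namespace IsCopula

variable {C : ℝ → ℝ → ℝ}

lemma monotoneOn_right (hC : IsCopula C) {u : ℝ} (hu : u ∈ Icc (0:ℝ) 1) :
    MonotoneOn (C u) (Icc 0 1) := fun v₁ hv₁ v₂ hv₂ hle => by
  linarith [hC.2.2.2.2 0 u v₁ v₂ le_rfl hu.1 hu.2 hv₁.1 hle hv₂.2, hC.1 v₁ hv₁, hC.1 v₂ hv₂]

lemma monotoneOn_left (hC : IsCopula C) {v : ℝ} (hv : v ∈ Icc (0:ℝ) 1) :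
    MonotoneOn (fun u => C u v) (Icc 0 1) := fun u₁ hu₁ u₂ hu₂ hle => by
  linarith [hC.2.2.2.2 u₁ u₂ 0 v hu₁.1 hle hu₂.2 le_rfl hv.1 hv.2, hC.2.1 u₁ hu₁, hC.2.1 u₂ hu₂]

lemma unitSquareIntegrable (hC : IsCopula C) : UnitSquareIntegrable C :=
  .of_monotoneOn (fun _ hu => hC.monotoneOn_right hu) (fun _ hv => hC.monotoneOn_left hv)

lemma eq_min_of_notMem_Ioo (hC : IsCopula C) {s t : ℝ} (hs : s ∈ Icc (0:ℝ) 1)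
    (ht : t ∈ Icc (0:ℝ) 1) (h : ¬(s ∈ Ioo (0:ℝ) 1 ∧ t ∈ Ioo (0:ℝ) 1)) : C s t = min s t := by
  have endpoint : ∀ x ∈ Icc (0:ℝ) 1, x ∉ Ioo (0:ℝ) 1 → x = 0 ∨ x = 1 := fun x hx hx' => by
    rcases hx.1.eq_or_lt with h0 | h0
    · exact .inl h0.symm
    · exact .inr (hx.2.eq_or_lt.resolve_right fun h1 => hx' ⟨h0, h1⟩)
  rcases not_and_or.mp h with h | h
  · rcases endpoint s hs h with rfl | rfl
    · rw [hC.1 t ht, min_eq_left ht.1]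
    · rw [hC.2.2.2.1 t ht, min_eq_right ht.2]
  · rcases endpoint t ht h with rfl | rfl
    · rw [hC.2.1 s hs, min_eq_right hs.1]
    · rw [hC.2.2.1 s hs, min_eq_left hs.2]

end IsCopula

section Rescaling

variable {a b : ℝ}

lemma rescale_mem_Icc (hab : a ≤ b) {u : ℝ} (hu : u ∈ Icc a b) :
    (u - a) / (b - a) ∈ Icc (0:ℝ) 1 := by
  rcases hab.eq_or_lt with rfl | hab
  · simp
  · exact ⟨div_nonneg (by linarith [hu.1]) (by linarith),
      (div_le_one (by linarith)).2 (by linarith [hu.2])⟩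

lemma rescale_mem_Ioo_iff (hab : a < b) {u : ℝ} :
    (u - a) / (b - a) ∈ Ioo (0:ℝ) 1 ↔ u ∈ Ioo a b := by
  rw [mem_Ioo, mem_Ioo, div_pos_iff_of_pos_right (by linarith), div_lt_one (by linarith)]
  constructor <;> rintro ⟨h₁, h₂⟩ <;> constructor <;> linarith

lemma add_mul_min_rescale (hab : a ≤ b) {u v : ℝ} (hu : u ∈ Icc a b) (hv : v ∈ Icc a b) :
    a + (b - a) * min ((u - a) / (b - a)) ((v - a) / (b - a)) = min u v := by
  rcases hab.eq_or_lt with rfl | hab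
  · rw [le_antisymm hu.2 hu.1, le_antisymm hv.2 hv.1]
    simp
  · rw [min_div_div_right (by linarith), min_sub_sub_right, mul_div_cancel₀ _ (by linarith)]
    ring

lemma intervalIntegral_comp_rescale (f : ℝ → ℝ) :
    ∫ x in a..b, f ((x - a) / (b - a)) = (b - a) * ∫ t in (0:ℝ)..1, f t := by
  rcases eq_or_ne (b - a) 0 with h | h
  · rw [sub_eq_zero.mp h]
    simp
  · simp_rw [sub_div]
    rw [intervalIntegral.integral_comp_div_sub f h, sub_self, ← sub_div, div_self h, smul_eq_mul]

lemma IntervalIntegrable.comp_rescale {f : ℝ → ℝ} (hf : IntervalIntegrable f volume 0 1) :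
    IntervalIntegrable (fun x => f ((x - a) / (b - a))) volume a b := by
  rcases eq_or_ne (b - a) 0 with h | h
  · exact sub_eq_zero.mp h ▸ .refl
  convert (hf.comp_mul_left (c := (b - a)⁻¹)).comp_sub_right a using 1
  · simp only [div_eq_inv_mul]
  · simp
  · field_simp
    ring

lemma intervalIntegral_indicator_Ioo (ha : 0 ≤ a) (hab : a ≤ b) (hb : b ≤ 1) (f : ℝ → ℝ) :
    ∫ x in (0:ℝ)..1, (Ioo a b).indicator f x = ∫ x in a..b, f x := by
  rw [intervalIntegral.integral_of_le zero_le_one, integral_indicator measurableSet_Ioo,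
    Measure.restrict_restrict measurableSet_Ioo,
    inter_eq_left.mpr (Ioo_subset_Ioc_self.trans (Ioc_subset_Ioc ha hb)),
    ← integral_Ioc_eq_integral_Ioo, intervalIntegral.integral_of_le hab]

lemma IntervalIntegrable.indicator_Ioo {f : ℝ → ℝ} (hf : IntervalIntegrable f volume a b)
    (hab : a ≤ b) (c d : ℝ) : IntervalIntegrable ((Ioo a b).indicator f) volume c d :=
  ((integrable_indicator_iff measurableSet_Ioo).mpr
    ((intervalIntegrable_iff_integrableOn_Ioo_of_le hab).mp hf)).intervalIntegrable

end Rescaling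

noncomputable def squarePatch (a b : ℝ) (g : ℝ → ℝ → ℝ) (u v : ℝ) : ℝ :=
  if u ∈ Ioo a b ∧ v ∈ Ioo a b then (b - a) * g ((u - a) / (b - a)) ((v - a) / (b - a)) else 0

section SquarePatch

variable {a b : ℝ} {g : ℝ → ℝ → ℝ}

lemma squarePatch_of_mem {u : ℝ} (hu : u ∈ Ioo a b) :
    squarePatch a b g u = (Ioo a b).indicator
      fun v => (b - a) * g ((u - a) / (b - a)) ((v - a) / (b - a)) := by
  ext v
  simp only [squarePatch, indicator_apply, hu, true_and]

lemma squarePatch_of_notMem {u : ℝ} (hu : u ∉ Ioo a b) : squarePatch a b g u = 0 := by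
  ext v
  simp only [squarePatch, hu, false_and, if_false, Pi.zero_apply]

lemma integral_squarePatch (ha : 0 ≤ a) (hab : a ≤ b) (hb : b ≤ 1) (u : ℝ) :
    ∫ v in (0:ℝ)..1, squarePatch a b g u v = (Ioo a b).indicator
      (fun u => (b - a) ^ 2 * ∫ t in (0:ℝ)..1, g ((u - a) / (b - a)) t) u := by
  by_cases hu : u ∈ Ioo a b
  · rw [squarePatch_of_mem hu, intervalIntegral_indicator_Ioo ha hab hb,
      intervalIntegral.integral_const_mul, intervalIntegral_comp_rescale, indicator_of_mem hu]
    ring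
  · rw [squarePatch_of_notMem hu, indicator_of_notMem hu]
    simp

lemma unitSquareIntegral_squarePatch (ha : 0 ≤ a) (hab : a ≤ b) (hb : b ≤ 1) :
    unitSquareIntegral (squarePatch a b g) = (b - a) ^ 3 * unitSquareIntegral g := by
  rw [unitSquareIntegral]
  simp_rw [integral_squarePatch ha hab hb]
  rw [intervalIntegral_indicator_Ioo ha hab hb, intervalIntegral.integral_const_mul,
    intervalIntegral_comp_rescale (fun w => ∫ t in (0:ℝ)..1, g w t), unitSquareIntegral]
  ring

lemma UnitSquareIntegrable.squarePatch (hg : UnitSquareIntegrable g) (ha : 0 ≤ a) (hab : a ≤ b)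
    (hb : b ≤ 1) : UnitSquareIntegrable (squarePatch a b g) := by
  refine ⟨fun u _ => ?_, ?_⟩
  · by_cases hu : u ∈ Ioo a b
    · rw [squarePatch_of_mem hu]
      exact ((hg.1 _ (rescale_mem_Icc hab (Ioo_subset_Icc_self hu))).comp_rescale.const_mul
        _).indicator_Ioo hab 0 1
    · rw [squarePatch_of_notMem hu]
      exact intervalIntegrable_const
  · simp_rw [integral_squarePatch ha hab hb]
    exact (hg.2.comp_rescale.const_mul _).indicator_Ioo hab 0 1

end SquarePatch

namespace IsOrdinalSum

variable {n : ℕ} {a b : Fin n → ℝ} {Bk : Fin n → ℝ → ℝ → ℝ} {B : ℝ → ℝ → ℝ}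

lemma sub_min_eq (hB : IsOrdinalSum a b Bk B) (k : Fin n) {u v : ℝ} (hu : u ∈ Icc (a k) (b k))
    (hv : v ∈ Icc (a k) (b k)) :
    B u v - min u v = (b k - a k) * (Bk k ((u - a k) / (b k - a k)) ((v - a k) / (b k - a k))
      - min ((u - a k) / (b k - a k)) ((v - a k) / (b k - a k))) := by
  rw [hB.2.2.1 k u hu v hv, ← add_mul_min_rescale (hB.1 k).2.1 hu hv]
  ring

lemma eq_min_of_forall_notMem_Ioo (hB : IsOrdinalSum a b Bk B) (hBk : ∀ k, IsCopula (Bk k))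
    {u v : ℝ} (hu : u ∈ Icc (0:ℝ) 1) (hv : v ∈ Icc (0:ℝ) 1)
    (huv : ∀ k, u ∈ Ioo (a k) (b k) → v ∉ Ioo (a k) (b k)) : B u v = min u v := by
  by_cases hsq : ∃ k, u ∈ Icc (a k) (b k) ∧ v ∈ Icc (a k) (b k)
  · obtain ⟨k, huk, hvk⟩ := hsq
    have hab := (hB.1 k).2.1
    rw [← sub_eq_zero, hB.sub_min_eq k huk hvk]
    rcases hab.eq_or_lt with heq | hlt
    · rw [heq, sub_self, zero_mul]
    -- on the boundary of the square, `(u, v)` rescales to the boundary of `[0,1]²`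
    rw [(hBk k).eq_min_of_notMem_Ioo (rescale_mem_Icc hab huk) (rescale_mem_Icc hab hvk),
      sub_self, mul_zero]
    rw [rescale_mem_Ioo_iff hlt, rescale_mem_Ioo_iff hlt]
    exact fun h => huv k h.1 h.2
  · push Not at hsq
    exact hB.2.2.2 u hu v hv fun k hk => hsq k hk.1 hk.2

lemma eq_min_add_sum_squarePatch (hB : IsOrdinalSum a b Bk B) (hBk : ∀ k, IsCopula (Bk k))
    {u v : ℝ} (hu : u ∈ Icc (0:ℝ) 1) (hv : v ∈ Icc (0:ℝ) 1) :
    B u v = min u v + ∑ k, squarePatch (a k) (b k) (fun s t => Bk k s t - min s t) u v := by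
  by_cases hsq : ∃ j, u ∈ Ioo (a j) (b j) ∧ v ∈ Ioo (a j) (b j)
  · obtain ⟨j, huj, hvj⟩ := hsq
    have hothers : ∀ i ≠ j, squarePatch (a i) (b i) (fun s t => Bk i s t - min s t) u v = 0 :=
      fun i hij => if_neg fun hi => disjoint_left.mp (hB.2.1 hij) hi.1 huj
    rw [Finset.sum_eq_single j (fun i _ hij => hothers i hij) (by simp), squarePatch,
      if_pos ⟨huj, hvj⟩, ← hB.sub_min_eq j (Ioo_subset_Icc_self huj) (Ioo_subset_Icc_self hvj),
      add_sub_cancel]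
  · push Not at hsq
    have hzero : ∀ k, squarePatch (a k) (b k) (fun s t => Bk k s t - min s t) u v = 0 :=
      fun k => if_neg fun h => hsq k h.1 h.2
    rw [Finset.sum_eq_zero fun k _ => hzero k, add_zero]
    exact hB.eq_min_of_forall_notMem_Ioo hBk hu hv hsq

lemma unitSquareIntegral_eq (hB : IsOrdinalSum a b Bk B) (hBk : ∀ k, IsCopula (Bk k)) :
    unitSquareIntegral B =
      1 / 3 + ∑ k, (b k - a k) ^ 3 * (unitSquareIntegral (Bk k) - 1 / 3) := by
  have hdev : ∀ k, UnitSquareIntegrable fun s t => Bk k s t - min s t := fun k =>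
    (hBk k).unitSquareIntegrable.sub unitSquareIntegrable_min
  have hpatch : ∀ k ∈ Finset.univ,
      UnitSquareIntegrable (squarePatch (a k) (b k) fun s t => Bk k s t - min s t) :=
    fun k _ => (hdev k).squarePatch (hB.1 k).1 (hB.1 k).2.1 (hB.1 k).2.2
  calc unitSquareIntegral B
      = unitSquareIntegral fun u v =>
          min u v + ∑ k, squarePatch (a k) (b k) (fun s t => Bk k s t - min s t) u v :=
        unitSquareIntegral_congr fun u hu v hv => hB.eq_min_add_sum_squarePatch hBk hu hv
    _ = unitSquareIntegral min +
          ∑ k, unitSquareIntegral (squarePatch (a k) (b k) fun s t => Bk k s t - min s t) := by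
        rw [unitSquareIntegral_add unitSquareIntegrable_min (.sum _ hpatch),
          unitSquareIntegral_sum _ hpatch]
    _ = 1 / 3 + ∑ k, (b k - a k) ^ 3 * (unitSquareIntegral (Bk k) - 1 / 3) := by
        simp only [unitSquareIntegral_squarePatch (hB.1 _).1 (hB.1 _).2.1 (hB.1 _).2.2,
          unitSquareIntegral_sub (hBk _).unitSquareIntegrable unitSquareIntegrable_min,
          unitSquareIntegral_min]

end IsOrdinalSum

/-- Spearman's rho of an ordinal sum:
ρ(B) = 1 − Σ_k (b_k − a_k)³ (1 − ρ(B_k)). -/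
theorem spearmanRho_ordinalSum {n : ℕ} (a b : Fin n → ℝ) (Bk : Fin n → ℝ → ℝ → ℝ)
    (B : ℝ → ℝ → ℝ) (hBk : ∀ k, IsCopula (Bk k)) (hB : IsOrdinalSum a b Bk B) :
    spearmanRho B = 1 - ∑ k, (b k - a k) ^ 3 * (1 - spearmanRho (Bk k)) := by
  have hsum : ∑ k, (b k - a k) ^ 3 * (1 - spearmanRho (Bk k)) =
      -12 * ∑ k, (b k - a k) ^ 3 * (unitSquareIntegral (Bk k) - 1 / 3) := by
    rw [Finset.mul_sum]
    exact Finset.sum_congr rfl fun k _ => by rw [spearmanRho_eq_unitSquareIntegral]; ring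
  rw [hsum, spearmanRho_eq_unitSquareIntegral, hB.unitSquareIntegral_eq hBk]
  ring
end

section
/- Let B be the ordinal sum of copulas B_1,…,B_n with respect to pairwise disjoint open subintervals (a_1,b_1),…,(a_n,b_n) of [0,1]. Suppose 1/2 ∈ (a_j, b_j) for some j ∈ {1,…,n}, and set c = (1 − a_j − b_j)/(b_j − a_j) ∈ (−1,1). Then Gini's gamma of B satisfies γ(B) = 4(b_j − a_j)²·max{0,c}² + 4a_j − 4a_j² − (2/3)·Σ_{k=1}^n (b_k − a_k)²·(1 − φ(B_k)) + 4(b_j − a_j)²·∫_{max{0,c}}^{1 + min{0,c}} B_j(t, 1 + c − t) dt, where φ denotes Spearman's footrule. In particular, if a_j + b_j = 1 then γ(B) = 1 − (b_j − a_j)²·(1 − γ(B_j)) − (2/3)·Σ_{k≠j} (b_k − a_k)²·(1 − φ(B_k)). -/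
/-! On the diagonal an ordinal sum equals `min` off the blocks and an affine rescaling of `B_k` on
the block `[a_k, b_k]²`; rescaling the integral of `B(u, u) - u` over each block gives
`1 - φ(B) = Σ (b_k - a_k)² (1 - φ(B_k))`. The antidiagonal `v = 1 - u` meets only the block
containing `1/2`, for `u ∈ [L, 1 - L]` with `L = max(a_j, 1 - b_j)`. Outside it `B = min`, which
contributes `L²`; inside, the substitution `u = a_j + (b_j - a_j) t` turns `B(u, 1 - u)` into
`a_j + (b_j - a_j) B_j(t, 1 + c - t)` for `t ∈ [max 0 c, 1 + min 0 c]`. -/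

open MeasureTheory Set

namespace IsCopula

variable {C : ℝ → ℝ → ℝ}

lemma swap (h : IsCopula C) : IsCopula (Function.swap C) :=
  ⟨h.2.1, h.1, h.2.2.2.1, h.2.2.1, fun u₁ u₂ v₁ v₂ hu₁ hu hu₂ hv₁ hv hv₂ => by
    have := h.2.2.2.2 v₁ v₂ u₁ u₂ hv₁ hv hv₂ hu₁ hu hu₂
    simp only [Function.swap]
    linarith⟩

lemma abs_sub_fst_le (h : IsCopula C) {u u' v : ℝ} (hu : u ∈ Icc (0:ℝ) 1)
    (hu' : u' ∈ Icc (0:ℝ) 1) (hv : v ∈ Icc (0:ℝ) 1) : |C u v - C u' v| ≤ |u - u'| := by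
  wlog hle : u' ≤ u generalizing u u'
  · rw [abs_sub_comm, abs_sub_comm u]
    exact this hu' hu (le_of_not_ge hle)
  have hlow := h.2.2.2.2 u' u 0 v hu'.1 hle hu.2 le_rfl hv.1 hv.2
  have hhigh := h.2.2.2.2 u' u v 1 hu'.1 hle hu.2 hv.1 hv.2 le_rfl
  rw [h.2.1 u hu, h.2.1 u' hu'] at hlow
  rw [h.2.2.1 u hu, h.2.2.1 u' hu'] at hhigh
  rw [abs_of_nonneg (sub_nonneg.2 hle), abs_le]
  constructor <;> linarith

lemma abs_sub_le (h : IsCopula C) {u u' v v' : ℝ} (hu : u ∈ Icc (0:ℝ) 1)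
    (hu' : u' ∈ Icc (0:ℝ) 1) (hv : v ∈ Icc (0:ℝ) 1) (hv' : v' ∈ Icc (0:ℝ) 1) :
    |C u v - C u' v'| ≤ |u - u'| + |v - v'| :=
  calc |C u v - C u' v'| ≤ |C u v - C u' v| + |C u' v - C u' v'| := _root_.abs_sub_le _ _ _
    _ ≤ |u - u'| + |v - v'| :=
      add_le_add (h.abs_sub_fst_le hu hu' hv) (h.swap.abs_sub_fst_le hv hv' hu')

lemma lipschitzOnWith (h : IsCopula C) :
    LipschitzOnWith 2 (Function.uncurry C) (Icc 0 1 ×ˢ Icc 0 1) := by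
  rw [lipschitzOnWith_iff_dist_le_mul]
  rintro ⟨u, v⟩ ⟨hu, hv⟩ ⟨u', v'⟩ ⟨hu', hv'⟩
  simp only [Function.uncurry_apply_pair, Real.dist_eq, Prod.dist_eq, NNReal.coe_ofNat]
  linarith [h.abs_sub_le hu hu' hv hv', le_max_left |u - u'| |v - v'|,
    le_max_right |u - u'| |v - v'|]

lemma continuousOn (h : IsCopula C) :
    ContinuousOn (Function.uncurry C) (Icc 0 1 ×ˢ Icc 0 1) :=
  h.lipschitzOnWith.continuousOn

lemma integral_diag_sub_id (h : IsCopula C) :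
    ∫ t in (0:ℝ)..1, (C t t - t) = (footrule C - 1) / 6 := by
  have hdiag : IntervalIntegrable (fun t => C t t) volume 0 1 :=
    (h.continuousOn.comp (continuous_id.prodMk continuous_id).continuousOn
      fun t ht => ⟨ht, ht⟩).intervalIntegrable_of_Icc zero_le_one
  rw [intervalIntegral.integral_sub hdiag intervalIntegral.intervalIntegrable_id, integral_id,
    footrule]
  ring

end IsCopula

lemma giniGamma_eq_footrule_add (C : ℝ → ℝ → ℝ) :
    giniGamma C = 2 / 3 * footrule C + 4 * (∫ u in (0:ℝ)..1, C u (1 - u)) - 2 / 3 := by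
  rw [giniGamma, footrule]
  ring

lemma integral_eq_sq_add_of_eqOn_min {G : ℝ → ℝ} {L : ℝ} (hL₀ : 0 ≤ L) (hL : L ≤ 1 / 2)
    (hG : ∀ u ∈ Ioo 0 L ∪ Ioo (1 - L) 1, G u = min u (1 - u))
    (hcont : ContinuousOn G (Icc L (1 - L))) :
    ∫ u in (0:ℝ)..1, G u = L ^ 2 + ∫ u in L..1 - L, G u := by
  have h₁ : EqOn G id (Ioo 0 L) := fun u hu =>
    (hG u (Or.inl hu)).trans (min_eq_left (by linarith [hu.2]))
  have h₃ : EqOn G (fun u => 1 - u) (Ioo (1 - L) 1) := fun u hu =>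
    (hG u (Or.inr hu)).trans (min_eq_right (by linarith [hu.1]))
  have i₁ : IntervalIntegrable G volume 0 L :=
    (intervalIntegral.intervalIntegrable_id).congr_uIoo (by rw [uIoo_of_le hL₀]; exact h₁.symm)
  have i₂ : IntervalIntegrable G volume L (1 - L) :=
    hcont.intervalIntegrable_of_Icc (by linarith)
  have i₃ : IntervalIntegrable G volume (1 - L) 1 :=
    (intervalIntegrable_const.sub intervalIntegral.intervalIntegrable_id).congr_uIoo
      (by rw [uIoo_of_le (by linarith)]; exact h₃.symm)
  rw [← intervalIntegral.integral_add_adjacent_intervals (i₁.trans i₂) i₃,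
    ← intervalIntegral.integral_add_adjacent_intervals i₁ i₂,
    intervalIntegral.integral_congr_Ioo_of_le hL₀ h₁,
    intervalIntegral.integral_congr_Ioo_of_le (by linarith) h₃,
    intervalIntegral.integral_sub intervalIntegrable_const intervalIntegral.intervalIntegrable_id]
  simp only [id_eq, integral_id, intervalIntegral.integral_const, smul_eq_mul]
  ring

namespace IsOrdinalSum

variable {n : ℕ} {a b : Fin n → ℝ} {Bk : Fin n → ℝ → ℝ → ℝ} {B : ℝ → ℝ → ℝ}

lemma apply_affine (hB : IsOrdinalSum a b Bk B) (k : Fin n) {t t' : ℝ}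
    (ht : t ∈ Icc (0:ℝ) 1) (ht' : t' ∈ Icc (0:ℝ) 1) :
    B (a k + (b k - a k) * t) (a k + (b k - a k) * t') = a k + (b k - a k) * Bk k t t' := by
  have hs : 0 ≤ b k - a k := sub_nonneg.2 (hB.1 k).2.1
  have hmem : ∀ x ∈ Icc (0:ℝ) 1, a k + (b k - a k) * x ∈ Icc (a k) (b k) := fun x hx =>
    ⟨le_add_of_nonneg_right (mul_nonneg hs hx.1), by nlinarith [hx.2]⟩
  rw [hB.2.2.1 k _ (hmem t ht) _ (hmem t' ht')]
  rcases hs.eq_or_lt with hs | hs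
  · simp [← hs]
  · simp only [add_sub_cancel_left, mul_div_cancel_left₀ _ hs.ne']

lemma continuousOn_square (hB : IsOrdinalSum a b Bk B) {k : Fin n} (hBk : IsCopula (Bk k)) :
    ContinuousOn (Function.uncurry B) (Icc (a k) (b k) ×ˢ Icc (a k) (b k)) := by
  rcases (hB.1 k).2.1.eq_or_lt with hab | hab
  · rw [← hab, Icc_self, singleton_prod_singleton]
    exact continuousOn_singleton _ _
  have hs : 0 < b k - a k := sub_pos.2 hab
  have hrescale : ∀ x ∈ Icc (a k) (b k), (x - a k) / (b k - a k) ∈ Icc (0:ℝ) 1 := fun x hx =>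
    ⟨div_nonneg (sub_nonneg.2 hx.1) hs.le, (div_le_one hs).2 (by linarith [hx.2])⟩
  refine ContinuousOn.congr (f := fun p : ℝ × ℝ =>
    a k + (b k - a k) * Bk k ((p.1 - a k) / (b k - a k)) ((p.2 - a k) / (b k - a k))) ?_ ?_
  · refine continuousOn_const.add (continuousOn_const.mul (hBk.continuousOn.comp
      (f := fun p : ℝ × ℝ => ((p.1 - a k) / (b k - a k), (p.2 - a k) / (b k - a k))) ?_ ?_))
    · fun_prop
    · exact fun p hp => ⟨hrescale p.1 hp.1, hrescale p.2 hp.2⟩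
  · exact fun p hp => hB.2.2.1 k p.1 hp.1 p.2 hp.2

lemma apply_self_of_forall_notMem (hB : IsOrdinalSum a b Bk B) (hBk : ∀ k, IsCopula (Bk k))
    {u : ℝ} (hu : u ∈ Icc (0:ℝ) 1) (hout : ∀ k, u ∉ Ioo (a k) (b k)) : B u u = u := by
  by_cases hblock : ∃ k, u ∈ Icc (a k) (b k)
  · obtain ⟨k, hk⟩ := hblock
    have hend : u = a k ∨ u = b k := by
      by_contra! hne
      exact hout k ⟨lt_of_le_of_ne hk.1 hne.1.symm, lt_of_le_of_ne hk.2 hne.2⟩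
    have h01 : (0:ℝ) ∈ Icc 0 1 := ⟨le_rfl, zero_le_one⟩
    have h11 : (1:ℝ) ∈ Icc 0 1 := ⟨zero_le_one, le_rfl⟩
    rcases hend with rfl | rfl
    · simpa [(hBk k).1 0 h01] using hB.apply_affine k h01 h01
    · simpa [(hBk k).2.2.1 1 h11] using hB.apply_affine k h11 h11
  · simp only [not_exists] at hblock
    rw [hB.2.2.2 u hu u hu fun k hk => hblock k hk.1, min_self]

lemma apply_antidiag_of_notMem (hB : IsOrdinalSum a b Bk B) {j : Fin n}
    (hj : (1:ℝ) / 2 ∈ Ioo (a j) (b j)) {u : ℝ} (hu : u ∈ Icc (0:ℝ) 1)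
    (hout : ¬(u ∈ Icc (a j) (b j) ∧ 1 - u ∈ Icc (a j) (b j))) :
    B u (1 - u) = min u (1 - u) := by
  refine hB.2.2.2 u hu (1 - u) ⟨by linarith [hu.2], by linarith [hu.1]⟩ fun k hk => ?_
  obtain ⟨⟨hku, huk⟩, hku', huk'⟩ := hk
  rcases eq_or_ne k j with rfl | hkj
  · exact hout ⟨⟨hku, huk⟩, hku', huk'⟩
  rcases (hB.1 k).2.1.eq_or_lt with hab | hab
  · obtain rfl : u = 1 / 2 := by linarith
    exact hout ⟨Ioo_subset_Icc_self hj, by norm_num; exact Ioo_subset_Icc_self hj⟩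
  · have hmeet : (Ioo (a k) (b k) ∩ Ioo (a j) (b j)).Nonempty := by
      rw [Ioo_inter_Ioo, nonempty_Ioo, max_lt_iff, lt_min_iff, lt_min_iff]
      exact ⟨⟨hab, by linarith [hj.2]⟩, by linarith [hj.1], hj.1.trans hj.2⟩
    exact hmeet.ne_empty (hB.2.1 hkj).inter_eq

lemma integral_diag_sub_id_block (hB : IsOrdinalSum a b Bk B) (k : Fin n) :
    ∫ u in a k..b k, (B u u - u) = (b k - a k) ^ 2 * ∫ t in (0:ℝ)..1, (Bk k t t - t) := by
  have hlim := intervalIntegral.smul_integral_comp_mul_add (a := (0:ℝ)) (b := 1)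
    (f := fun u => B u u - u) (b k - a k) (a k)
  simp only [mul_zero, zero_add, mul_one, sub_add_cancel, smul_eq_mul] at hlim
  rw [← hlim, pow_two, mul_assoc]
  congr 1
  rw [← intervalIntegral.integral_const_mul]
  refine intervalIntegral.integral_congr fun t ht => ?_
  rw [uIcc_of_le zero_le_one] at ht
  simp only [add_comm _ (a k), hB.apply_affine k ht ht]
  ring

lemma integrableOn_diag_sub_id_block (hB : IsOrdinalSum a b Bk B) {k : Fin n}
    (hBk : IsCopula (Bk k)) : IntegrableOn (fun u => B u u - u) (Ioo (a k) (b k)) := by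
  have hcont : ContinuousOn (fun u => B u u - u) (Icc (a k) (b k)) :=
    ((hB.continuousOn_square hBk).comp (continuous_id.prodMk continuous_id).continuousOn
      fun u hu => ⟨hu, hu⟩).sub continuousOn_id
  exact (hcont.integrableOn_Icc).mono_set Ioo_subset_Icc_self

lemma diag_sub_id_eq_zero_off_blocks (hB : IsOrdinalSum a b Bk B) (hBk : ∀ k, IsCopula (Bk k))
    {u : ℝ} (hu : u ∈ Ioc (0:ℝ) 1 \ ⋃ k, Ioo (a k) (b k)) : B u u - u = 0 := by
  simp only [mem_sdiff, mem_iUnion, not_exists] at hu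
  rw [hB.apply_self_of_forall_notMem hBk (Ioc_subset_Icc_self hu.1) hu.2, sub_self]

lemma intervalIntegrable_diag_sub_id (hB : IsOrdinalSum a b Bk B) (hBk : ∀ k, IsCopula (Bk k)) :
    IntervalIntegrable (fun u => B u u - u) volume 0 1 := by
  rw [intervalIntegrable_iff_integrableOn_Ioc_of_le zero_le_one]
  exact (integrableOn_finite_iUnion.2 fun k => hB.integrableOn_diag_sub_id_block (hBk k))
    |>.of_forall_sdiff_eq_zero measurableSet_Ioc
      fun u hu => hB.diag_sub_id_eq_zero_off_blocks hBk hu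

lemma integral_diag_sub_id (hB : IsOrdinalSum a b Bk B) (hBk : ∀ k, IsCopula (Bk k)) :
    ∫ u in (0:ℝ)..1, (B u u - u) = ∑ k, (b k - a k) ^ 2 * ∫ t in (0:ℝ)..1, (Bk k t t - t) := by
  have hsub : (⋃ k, Ioo (a k) (b k)) ⊆ Ioc 0 1 := iUnion_subset fun k u hu =>
    ⟨(hB.1 k).1.trans_lt hu.1, hu.2.le.trans (hB.1 k).2.2⟩
  rw [intervalIntegral.integral_of_le zero_le_one,
    setIntegral_eq_of_subset_of_forall_sdiff_eq_zero measurableSet_Ioc hsub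
      fun u hu => hB.diag_sub_id_eq_zero_off_blocks hBk hu,
    integral_iUnion_fintype (fun k => measurableSet_Ioo) hB.2.1
      fun k => hB.integrableOn_diag_sub_id_block (hBk k)]
  refine Finset.sum_congr rfl fun k _ => ?_
  rw [← hB.integral_diag_sub_id_block k, intervalIntegral.integral_of_le (hB.1 k).2.1,
    integral_Ioc_eq_integral_Ioo]

lemma footrule_eq (hB : IsOrdinalSum a b Bk B) (hBk : ∀ k, IsCopula (Bk k)) :
    footrule B = 1 - ∑ k, (b k - a k) ^ 2 * (1 - footrule (Bk k)) := by
  have hdiag : ∫ u in (0:ℝ)..1, B u u = (∫ u in (0:ℝ)..1, (B u u - u)) + 1 / 2 :=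
    calc ∫ u in (0:ℝ)..1, B u u = ∫ u in (0:ℝ)..1, ((B u u - u) + u) := by
          simp only [sub_add_cancel]
      _ = (∫ u in (0:ℝ)..1, (B u u - u)) + 1 / 2 := by
        rw [intervalIntegral.integral_add (hB.intervalIntegrable_diag_sub_id hBk)
          intervalIntegral.intervalIntegrable_id, integral_id]
        norm_num
  have hsum : ∑ k, (b k - a k) ^ 2 * ((footrule (Bk k) - 1) / 6) =
      -(1 / 6) * ∑ k, (b k - a k) ^ 2 * (1 - footrule (Bk k)) := by
    rw [Finset.mul_sum]
    exact Finset.sum_congr rfl fun _ _ => by ring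
  rw [footrule, hdiag, hB.integral_diag_sub_id hBk]
  simp only [(hBk _).integral_diag_sub_id]
  linarith

lemma integral_antidiag_block (hB : IsOrdinalSum a b Bk B) {j : Fin n} (hBk : IsCopula (Bk j))
    {c p q : ℝ} (hcs : c * (b j - a j) = 1 - a j - b j) (hpq : p ≤ q) (hp : 0 ≤ p) (hq : q ≤ 1)
    (hq' : 0 ≤ 1 + c - q) (hp' : 1 + c - p ≤ 1) :
    ∫ u in a j + (b j - a j) * p..a j + (b j - a j) * q, B u (1 - u) =
      (b j - a j) * ((q - p) * a j + (b j - a j) * ∫ t in p..q, Bk j t (1 + c - t)) := by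
  have hI : IntervalIntegrable (fun t => Bk j t (1 + c - t)) volume p q :=
    (hBk.continuousOn.comp (continuous_id.prodMk (continuous_const.sub continuous_id)).continuousOn
      fun t ht => show t ∈ Icc _ _ ∧ 1 + c - t ∈ Icc _ _ from
        ⟨⟨by linarith [ht.1], by linarith [ht.2]⟩, ⟨by linarith [ht.2], by linarith [ht.1]⟩⟩
      ).intervalIntegrable_of_Icc hpq
  have hlim := intervalIntegral.smul_integral_comp_mul_add (a := p) (b := q)
    (f := fun u => B u (1 - u)) (b j - a j) (a j)
  rw [add_comm ((b j - a j) * p) (a j), add_comm ((b j - a j) * q) (a j)] at hlim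
  rw [← hlim, smul_eq_mul]
  congr 1
  rw [intervalIntegral.integral_congr (g := fun t => a j + (b j - a j) * Bk j t (1 + c - t)),
    intervalIntegral.integral_add intervalIntegrable_const (hI.const_mul _),
    intervalIntegral.integral_const, intervalIntegral.integral_const_mul, smul_eq_mul]
  intro t ht
  rw [uIcc_of_le hpq] at ht
  have ht₀ : t ∈ Icc (0:ℝ) 1 := ⟨by linarith [ht.1], by linarith [ht.2]⟩
  have ht₁ : 1 + c - t ∈ Icc (0:ℝ) 1 := ⟨by linarith [ht.2], by linarith [ht.1]⟩
  dsimp only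
  rw [show 1 - ((b j - a j) * t + a j) = a j + (b j - a j) * (1 + c - t) by
      linear_combination -hcs,
    add_comm ((b j - a j) * t), hB.apply_affine j ht₀ ht₁]

lemma integral_antidiag (hB : IsOrdinalSum a b Bk B) {j : Fin n} (hBk : IsCopula (Bk j))
    (hj : (1:ℝ) / 2 ∈ Ioo (a j) (b j)) {c : ℝ} (hc : c = (1 - a j - b j) / (b j - a j)) :
    ∫ u in (0:ℝ)..1, B u (1 - u) = (a j + (b j - a j) * max 0 c) ^ 2 +
      (b j - a j) * ((1 + min 0 c - max 0 c) * a j +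
        (b j - a j) * ∫ t in (max 0 c)..(1 + min 0 c), Bk j t (1 + c - t)) := by
  have hs : 0 < b j - a j := by linarith [hj.1, hj.2]
  have hcs : c * (b j - a j) = 1 - a j - b j := by rw [hc]; field_simp
  have hMm : max 0 c + min 0 c = c := by rw [add_comm, min_add_max, zero_add]
  have hL : a j + (b j - a j) * max 0 c = max (a j) (1 - b j) := by
    rcases le_total c 0 with h | h
    · rw [max_eq_left h, mul_zero, add_zero, max_eq_left (by nlinarith)]
    · rw [max_eq_right h, max_eq_right (by nlinarith)]; linarith
  have h1L : 1 - max (a j) (1 - b j) = a j + (b j - a j) * (1 + min 0 c) := by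
    linear_combination (-(b j - a j)) * hMm - hcs + hL
  have hLa := le_max_left (a j) (1 - b j)
  have hLb := le_max_right (a j) (1 - b j)
  have hLhalf : max (a j) (1 - b j) ≤ 1 / 2 := max_le (by linarith [hj.1]) (by linarith [hj.2])
  have hout : ∀ u ∈ Ioo 0 (max (a j) (1 - b j)) ∪ Ioo (1 - max (a j) (1 - b j)) 1,
      ¬(u ∈ Icc (a j) (b j) ∧ 1 - u ∈ Icc (a j) (b j)) := by
    rintro u (hu | hu) ⟨hu₁, hu₂⟩
    · rcases lt_max_iff.1 hu.2 with h | h <;> linarith [hu₁.1, hu₂.2]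
    · rcases lt_max_iff.1 (by linarith [hu.1] : 1 - u < max (a j) (1 - b j)) with h | h <;>
        linarith [hu₁.2, hu₂.1]
  have hcont : ContinuousOn (fun u => B u (1 - u))
      (Icc (max (a j) (1 - b j)) (1 - max (a j) (1 - b j))) :=
    (hB.continuousOn_square hBk).comp
      (continuous_id.prodMk (continuous_const.sub continuous_id)).continuousOn fun u hu =>
        show u ∈ Icc _ _ ∧ 1 - u ∈ Icc _ _ from
          ⟨⟨by linarith [hu.1], by linarith [hu.2]⟩, ⟨by linarith [hu.2], by linarith [hu.1]⟩⟩
  have hMle : max 0 c ≤ 1 + min 0 c :=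
    le_of_mul_le_mul_left (by linarith : (b j - a j) * max 0 c ≤ (b j - a j) * (1 + min 0 c)) hs
  rw [hL, integral_eq_sq_add_of_eqOn_min ((hB.1 j).1.trans hLa) hLhalf
    (fun u hu => hB.apply_antidiag_of_notMem hj
      (by rcases hu with hu | hu <;>
        exact ⟨by linarith [hu.1, hLa, (hB.1 j).1], by linarith [hu.2]⟩)
      (hout u hu)) hcont, h1L, ← hL,
    hB.integral_antidiag_block hBk hcs hMle (le_max_left 0 c) (by linarith [min_le_left 0 c])
      (by linarith [le_max_left 0 c]) (by linarith [min_le_left 0 c])]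

end IsOrdinalSum

/-- Gini's gamma of an ordinal sum when 1/2 ∈ (a_j, b_j), with
c = (1 − a_j − b_j)/(b_j − a_j); together with the special case a_j + b_j = 1. -/
theorem giniGamma_ordinalSum_of_half_mem {n : ℕ} (a b : Fin n → ℝ)
    (Bk : Fin n → ℝ → ℝ → ℝ) (B : ℝ → ℝ → ℝ)
    (hBk : ∀ k, IsCopula (Bk k)) (hB : IsOrdinalSum a b Bk B)
    (j : Fin n) (hj : (1:ℝ)/2 ∈ Ioo (a j) (b j))
    (c : ℝ) (hc : c = (1 - a j - b j) / (b j - a j)) :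
    giniGamma B = 4 * (b j - a j) ^ 2 * (max 0 c) ^ 2 + 4 * a j - 4 * (a j) ^ 2
        - (2/3) * ∑ k, (b k - a k) ^ 2 * (1 - footrule (Bk k))
        + 4 * (b j - a j) ^ 2 * ∫ t in (max 0 c)..(1 + min 0 c), Bk j t (1 + c - t) ∧
      (a j + b j = 1 →
        giniGamma B = 1 - (b j - a j) ^ 2 * (1 - giniGamma (Bk j))
          - (2/3) * ∑ k ∈ Finset.univ.erase j, (b k - a k) ^ 2 * (1 - footrule (Bk k))) := by
  have hcs : c * (b j - a j) = 1 - a j - b j := by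
    rw [hc]; field_simp [(sub_pos.2 (hj.1.trans hj.2)).ne']
  have hMm : max 0 c + min 0 c = c := by rw [add_comm, min_add_max, zero_add]
  have hgamma : giniGamma B = 4 * (b j - a j) ^ 2 * (max 0 c) ^ 2 + 4 * a j - 4 * (a j) ^ 2
      - (2/3) * ∑ k, (b k - a k) ^ 2 * (1 - footrule (Bk k))
      + 4 * (b j - a j) ^ 2 * ∫ t in (max 0 c)..(1 + min 0 c), Bk j t (1 + c - t) := by
    rw [giniGamma_eq_footrule_add, hB.footrule_eq hBk, hB.integral_antidiag (hBk j) hj hc]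
    linear_combination (4 * a j * (b j - a j)) * hMm + 4 * a j * hcs
  refine ⟨hgamma, fun hsum => ?_⟩
  have hc0 : c = 0 := by rw [hc, show 1 - a j - b j = 0 by linarith, zero_div]
  rw [hgamma, hc0, ← Finset.add_sum_erase _ _ (Finset.mem_univ j), giniGamma_eq_footrule_add,
    show b j = 1 - a j by linarith]
  simp only [max_self, min_self, add_zero]
  ring
end

section
/- Let B be the ordinal sum of copulas B_1,…,B_n with respect to pairwise disjoint open subintervals (a_1,b_1),…,(a_n,b_n) of [0,1]. If 1/2 does not belong to any of the intervals (a_k,b_k), then Blomqvist's beta satisfies β(B) = 1. If 1/2 ∈ (a_j, b_j) for some j ∈ {1,…,n}, then β(B) = 4a_j + 4(b_j − a_j)·B_j((1/2 − a_j)/(b_j − a_j), (1/2 − a_j)/(b_j − a_j)) − 1; in particular, if a_j + b_j = 1 then β(B) = 1 − (b_j − a_j)·(1 − β(B_j)). -/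
open MeasureTheory Set

namespace IsOrdinalSum

variable {n : ℕ} {a b : Fin n → ℝ} {Bk : Fin n → ℝ → ℝ → ℝ} {B : ℝ → ℝ → ℝ}

/-- Such a `t` either lies in no closed square, where `B` is `min`, or is a corner `a k` or `b k`
of one, where the rescaled copula takes the value `0` or `1`. -/
theorem apply_self_of_forall_notMem_Ioo (hB : IsOrdinalSum a b Bk B)
    (hBk : ∀ k, IsCopula (Bk k)) {t : ℝ} (ht : t ∈ Icc 0 1)
    (hno : ∀ k, t ∉ Ioo (a k) (b k)) : B t t = t := by
  obtain ⟨-, -, hin, hout⟩ := hB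
  by_cases hex : ∃ k, t ∈ Icc (a k) (b k)
  · obtain ⟨k, hk⟩ := hex
    rw [hin k t hk t hk]
    obtain hta | hta := eq_or_ne t (a k)
    · rw [hta, sub_self, zero_div, (hBk k).1 0 ⟨le_rfl, zero_le_one⟩]
      ring
    · have htb : t = b k := hk.2.eq_or_lt.resolve_right fun h =>
        hno k ⟨hk.1.lt_of_ne (Ne.symm hta), h⟩
      have hba : b k - a k ≠ 0 := sub_ne_zero.mpr (htb ▸ hta)
      rw [← htb, div_self (htb ▸ hba), (hBk k).2.2.1 1 ⟨zero_le_one, le_rfl⟩]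
      ring
  · rw [hout t ht t ht fun k hk => hex ⟨k, hk.1⟩, min_self]

end IsOrdinalSum

/-- Blomqvist's beta of an ordinal sum. -/
theorem blomqvistBeta_ordinalSum {n : ℕ} (a b : Fin n → ℝ)
    (Bk : Fin n → ℝ → ℝ → ℝ) (B : ℝ → ℝ → ℝ)
    (hBk : ∀ k, IsCopula (Bk k)) (hB : IsOrdinalSum a b Bk B) :
    ((∀ k, (1:ℝ)/2 ∉ Ioo (a k) (b k)) → blomqvistBeta B = 1) ∧
    (∀ j, (1:ℝ)/2 ∈ Ioo (a j) (b j) →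
      blomqvistBeta B = 4 * a j
          + 4 * (b j - a j) * Bk j ((1/2 - a j) / (b j - a j)) ((1/2 - a j) / (b j - a j)) - 1 ∧
        (a j + b j = 1 →
          blomqvistBeta B = 1 - (b j - a j) * (1 - blomqvistBeta (Bk j)))) := by
  refine ⟨fun hno => ?_, fun j hj => ?_⟩
  · rw [blomqvistBeta, hB.apply_self_of_forall_notMem_Ioo hBk ⟨by norm_num, by norm_num⟩ hno]
    norm_num
  · have hIcc : (1:ℝ)/2 ∈ Icc (a j) (b j) := Ioo_subset_Icc_self hj
    have hβ : blomqvistBeta B = 4 * a j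
        + 4 * (b j - a j) * Bk j ((1/2 - a j) / (b j - a j)) ((1/2 - a j) / (b j - a j)) - 1 := by
      rw [blomqvistBeta, hB.2.2.1 j _ hIcc _ hIcc]
      ring
    refine ⟨hβ, fun hsum => ?_⟩
    have hd : b j - a j ≠ 0 := by linarith [hj.1, hj.2]
    have hhalf : (1/2 - a j) / (b j - a j) = 1/2 := by
      rw [div_eq_iff hd]
      linarith
    rw [hβ, hhalf, blomqvistBeta]
    linear_combination 2 * hsum
end

section
/- Let B be the ordinal sum of copulas B_1,…,B_n with respect to pairwise disjoint open subintervals (a_1,b_1),…,(a_n,b_n) of [0,1]. Suppose g : [0,1]² → ℝ and g_k : [0,1]² → ℝ (k = 1,…,n) are measurable functions such that, for almost every (u,v) ∈ [0,1]², g(u,v) is the partial derivative of B with respect to its first variable at (u,v) and, for each k, g_k(u,v) is the partial derivative of B_k with respect to its first variable at (u,v). Then Chatterjee's xi of B satisfies ξ(B) = 1 − Σ_{k=1}^n (b_k − a_k)² · (1 − ξ(B_k)), i.e., 6·∫_{[0,1]²} g(u,v)² du dv − 2 = 1 − Σ_{k=1}^n (b_k − a_k)² · (3 − 6·∫_{[0,1]²}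 g_k(u,v)² du dv). -/
open MeasureTheory Set

open Filter Topology

/-! Off the finitely many squares `[a_k, b_k]²` the ordinal sum is `min`, whose first partial
derivative is the indicator of `{u < v}`, with integral `1/2` over the unit square. On the open
square `(a_k, b_k)²` the ordinal sum is the affinely rescaled `B_k`, so there `∂₁B` is `∂₁B_k`
composed with the rescaling, and the change of variables contributes the Jacobian
`(b_k - a_k)²`. Hence `∫ (∂₁B)² = 1/2 + ∑ (b_k - a_k)² (∫ (∂₁B_k)² - 1/2)`. -/

namespace IsCopula

variable {C : ℝ → ℝ → ℝ}

theorem sub_mem_Icc (hC : IsCopula C) {u₁ u₂ v : ℝ} (h₀ : 0 ≤ u₁) (h₁₂ : u₁ ≤ u₂) (h₂ : u₂ ≤ 1)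
    (hv : v ∈ Icc (0:ℝ) 1) : C u₂ v - C u₁ v ∈ Icc 0 (u₂ - u₁) := by
  obtain ⟨-, hC0, hC1, -, hrect⟩ := hC
  have hlow := hrect u₁ u₂ 0 v h₀ h₁₂ h₂ le_rfl hv.1 hv.2
  have hupp := hrect u₁ u₂ v 1 h₀ h₁₂ h₂ hv.1 hv.2 le_rfl
  rw [hC0 u₂ ⟨h₀.trans h₁₂, h₂⟩, hC0 u₁ ⟨h₀, h₁₂.trans h₂⟩] at hlow
  rw [hC1 u₂ ⟨h₀.trans h₁₂, h₂⟩, hC1 u₁ ⟨h₀, h₁₂.trans h₂⟩] at hupp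
  constructor <;> linarith

theorem hasDerivAt_mem_Icc (hC : IsCopula C) {u v c : ℝ} (hu : u ∈ Ioo (0:ℝ) 1)
    (hv : v ∈ Icc (0:ℝ) 1) (hc : HasDerivAt (fun s => C s v) c u) : c ∈ Icc (0:ℝ) 1 := by
  have hacc : AccPt u (𝓟 (Icc (0:ℝ) 1)) := by
    refine AccPt.mono ?_ (principal_mono.2 Ioo_subset_Icc_self)
    simpa using (PerfectSpace.univ_preperfect.open_inter isOpen_Ioo) u ⟨hu, mem_univ _⟩
  have hmono : MonotoneOn (fun s => C s v) (Icc 0 1) := fun s hs t ht hst =>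
    sub_nonneg.1 (hC.sub_mem_Icc hs.1 hst ht.2 hv).1
  have hmono' : MonotoneOn (fun s => s - C s v) (Icc 0 1) := fun s hs t ht hst => by
    linarith [(hC.sub_mem_Icc hs.1 hst ht.2 hv).2]
  exact ⟨hc.hasDerivWithinAt.nonneg_of_monotoneOn hacc hmono,
    sub_nonneg.1 (((hasDerivAt_id u).sub hc).hasDerivWithinAt.nonneg_of_monotoneOn hacc hmono')⟩

theorem integrableOn_sq_of_hasDerivAt (hC : IsCopula C) {g : ℝ → ℝ → ℝ}
    (hgm : Measurable fun p : ℝ × ℝ => g p.1 p.2)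
    (hg : ∀ᵐ p ∂(volume.restrict (Ioo (0:ℝ) 1 ×ˢ Ioo (0:ℝ) 1)),
      HasDerivAt (fun s => C s p.2) (g p.1 p.2) p.1) :
    IntegrableOn (fun p : ℝ × ℝ => g p.1 p.2 ^ 2) (Ioo (0:ℝ) 1 ×ˢ Ioo (0:ℝ) 1) := by
  refine Integrable.mono' (integrableOn_const (C := (1:ℝ)) (by simp [Measure.volume_eq_prod]))
    (hgm.pow_const 2).aestronglyMeasurable ?_
  filter_upwards [hg, ae_restrict_mem (measurableSet_Ioo.prod measurableSet_Ioo)] with p hp hpU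
  have hg01 := hC.hasDerivAt_mem_Icc hpU.1 (Ioo_subset_Icc_self hpU.2) hp
  rw [Real.norm_eq_abs, abs_of_nonneg (by positivity)]
  nlinarith [hg01.1, hg01.2]

end IsCopula

theorem Ioo_prod_Ioo_ae_eq_Icc_prod_Icc {a b c d : ℝ} :
    (Ioo a b ×ˢ Ioo c d : Set (ℝ × ℝ)) =ᵐ[volume] Icc a b ×ˢ Icc c d := by
  rw [Measure.volume_eq_prod]
  exact Measure.set_prod_ae_eq Ioo_ae_eq_Icc Ioo_ae_eq_Icc

theorem ae_fst_ne_snd : ∀ᵐ p : ℝ × ℝ, p.1 ≠ p.2 := by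
  have := (Measure.ae_prod_mem_iff_ae_ae_mem (μ := (volume : Measure ℝ)) (ν := volume)
    (measurableSet_eq_fun measurable_fst measurable_snd).compl).2
    (Eventually.of_forall fun x => by simpa [eq_comm] using Measure.ae_ne volume x)
  rwa [← Measure.volume_eq_prod] at this

/-- `∂₁ min (u, v)` for `u ≠ v`. -/
noncomputable def ltIndicator : ℝ × ℝ → ℝ := {p | p.1 < p.2}.indicator 1

theorem hasDerivAt_min_ltIndicator {u v : ℝ} (huv : u ≠ v) :
    HasDerivAt (fun s => min s v) (ltIndicator (u, v)) u := by
  rcases huv.lt_or_gt with h | h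
  · rw [ltIndicator, indicator_of_mem (show (u, v) ∈ {p : ℝ × ℝ | p.1 < p.2} from h)]
    refine (hasDerivAt_id u).congr_of_eventuallyEq ?_
    filter_upwards [Iio_mem_nhds h] with s hs using min_eq_left hs.le
  · rw [ltIndicator, indicator_of_notMem (show (u, v) ∉ {p : ℝ × ℝ | p.1 < p.2} from h.not_gt)]
    refine (hasDerivAt_const u v).congr_of_eventuallyEq ?_
    filter_upwards [Ioi_mem_nhds h] with s hs using min_eq_right hs.le

theorem integrableOn_ltIndicator_Ioo_prod_Ioo {a b c d : ℝ} :
    IntegrableOn ltIndicator (Ioo a b ×ˢ Ioo c d) :=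
  have hfin := ((Metric.isBounded_Ioo a b).prod (Metric.isBounded_Ioo c d)).measure_lt_top
  (integrableOn_const hfin.ne).indicator (measurableSet_lt measurable_fst measurable_snd)

theorem setIntegral_ltIndicator_unitSquare :
    ∫ p in Ioo (0:ℝ) 1 ×ˢ Ioo (0:ℝ) 1, ltIndicator p = 1 / 2 := by
  rw [Measure.volume_eq_prod, setIntegral_prod _ (by
    rw [← Measure.volume_eq_prod]; exact integrableOn_ltIndicator_Ioo_prod_Ioo)]
  have hinner : ∀ x ∈ Ioo (0:ℝ) 1, ∫ y in Ioo (0:ℝ) 1, ltIndicator (x, y) = 1 - x := by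
    intro x hx
    have : (fun y => ltIndicator (x, y)) = (Ioi x).indicator 1 := rfl
    rw [this, integral_indicator_one measurableSet_Ioi,
      measureReal_restrict_apply measurableSet_Ioi, Ioi_inter_Ioo, max_eq_left hx.1.le,
      Real.volume_real_Ioo_of_le hx.2.le]
  rw [setIntegral_congr_fun measurableSet_Ioo hinner, ← integral_Ioc_eq_integral_Ioo,
    ← intervalIntegral.integral_of_le zero_le_one, intervalIntegral.integral_sub
      intervalIntegrable_const intervalIntegral.intervalIntegrable_id]
  norm_num

noncomputable def rescale (α β : ℝ) (p : ℝ × ℝ) : ℝ × ℝ :=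
  ((p.1 - α) / (β - α), (p.2 - α) / (β - α))

section Rescale

variable {α β : ℝ}

theorem rescale_eq_smul : rescale α β = fun p => (β - α)⁻¹ • (p - (α, α)) := by
  ext p <;> simp [rescale, div_eq_inv_mul]

theorem sub_div_sub_mem_Ioo_iff (h : α < β) {x : ℝ} :
    (x - α) / (β - α) ∈ Ioo (0:ℝ) 1 ↔ x ∈ Ioo α β := by
  rw [mem_Ioo, mem_Ioo, div_pos_iff_of_pos_right (sub_pos.2 h), div_lt_one (sub_pos.2 h),
    sub_pos, sub_lt_sub_iff_right]

theorem rescale_mem_unitSquare_iff (h : α < β) {p : ℝ × ℝ} :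
    rescale α β p ∈ Ioo (0:ℝ) 1 ×ˢ Ioo (0:ℝ) 1 ↔ p ∈ Ioo α β ×ˢ Ioo α β := by
  simp only [mem_prod, rescale, sub_div_sub_mem_Ioo_iff h]

theorem ltIndicator_rescale (h : α < β) (p : ℝ × ℝ) :
    ltIndicator (rescale α β p) = ltIndicator p := by
  have : (rescale α β p).1 < (rescale α β p).2 ↔ p.1 < p.2 := by
    simp only [rescale]; rw [div_lt_div_iff_of_pos_right (sub_pos.2 h), sub_lt_sub_iff_right]
  simp only [ltIndicator, indicator, mem_ofPred_eq, this, Pi.one_apply]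

theorem quasiMeasurePreserving_rescale (h : α < β) :
    Measure.QuasiMeasurePreserving (rescale α β) volume volume := by
  rw [rescale_eq_smul]
  exact (Measure.quasiMeasurePreserving_smul volume (inv_ne_zero (sub_pos.2 h).ne')).comp
    (measurePreserving_sub_right volume _).quasiMeasurePreserving

theorem integral_comp_rescale (h : α < β) (G : ℝ × ℝ → ℝ) :
    ∫ p, G (rescale α β p) = (β - α) ^ 2 * ∫ q, G q := by
  rw [rescale_eq_smul, integral_sub_right_eq_self (fun q => G ((β - α)⁻¹ • q)),
    Measure.integral_comp_inv_smul_of_nonneg volume G (sub_pos.2 h).le]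
  simp

theorem MeasureTheory.Integrable.comp_rescale (h : α < β) {G : ℝ × ℝ → ℝ}
    (hG : Integrable G) : Integrable fun p => G (rescale α β p) := by
  rw [rescale_eq_smul]
  exact (hG.comp_smul (inv_ne_zero (sub_pos.2 h).ne')).comp_sub_right _

theorem indicator_comp_rescale (h : α < β) (G : ℝ × ℝ → ℝ) :
    (Ioo α β ×ˢ Ioo α β).indicator (fun p => G (rescale α β p)) =
      fun p => (Ioo (0:ℝ) 1 ×ˢ Ioo (0:ℝ) 1).indicator G (rescale α β p) := by
  ext p
  simp only [indicator, rescale_mem_unitSquare_iff h]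

theorem setIntegral_comp_rescale (h : α ≤ β) (G : ℝ × ℝ → ℝ) :
    ∫ p in Ioo α β ×ˢ Ioo α β, G (rescale α β p) =
      (β - α) ^ 2 * ∫ q in Ioo (0:ℝ) 1 ×ˢ Ioo (0:ℝ) 1, G q := by
  rcases h.lt_or_eq with h | rfl
  · rw [← integral_indicator (measurableSet_Ioo.prod measurableSet_Ioo),
      ← integral_indicator (measurableSet_Ioo.prod measurableSet_Ioo), ← integral_comp_rescale h]
    rw [indicator_comp_rescale h]
  · simp

theorem MeasureTheory.IntegrableOn.comp_rescale (h : α ≤ β) {G : ℝ × ℝ → ℝ}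
    (hG : IntegrableOn G (Ioo (0:ℝ) 1 ×ˢ Ioo (0:ℝ) 1)) :
    IntegrableOn (fun p => G (rescale α β p)) (Ioo α β ×ˢ Ioo α β) := by
  rcases h.lt_or_eq with h | rfl
  · rw [← integrable_indicator_iff (measurableSet_Ioo.prod measurableSet_Ioo),
      indicator_comp_rescale h]
    exact (hG.integrable_indicator (measurableSet_Ioo.prod measurableSet_Ioo)).comp_rescale h
  · simp

theorem ae_restrict_rescale (h : α ≤ β) {P : ℝ × ℝ → Prop}
    (hP : ∀ᵐ q ∂(volume.restrict (Ioo (0:ℝ) 1 ×ˢ Ioo (0:ℝ) 1)), P q) :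
    ∀ᵐ p ∂(volume.restrict (Ioo α β ×ˢ Ioo α β)), P (rescale α β p) := by
  rcases h.lt_or_eq with h | rfl
  · rw [ae_restrict_iff' (measurableSet_Ioo.prod measurableSet_Ioo)] at hP ⊢
    filter_upwards [(quasiMeasurePreserving_rescale h).ae hP] with p hp hmem
    exact hp ((rescale_mem_unitSquare_iff h).2 hmem)
  · simp

theorem setIntegral_comp_rescale_sub_ltIndicator (h : α ≤ β) {G : ℝ × ℝ → ℝ}
    (hG : IntegrableOn G (Ioo (0:ℝ) 1 ×ˢ Ioo (0:ℝ) 1)) :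
    ∫ p in Ioo α β ×ˢ Ioo α β, (G (rescale α β p) - ltIndicator p) =
      (β - α) ^ 2 * ((∫ q in Ioo (0:ℝ) 1 ×ˢ Ioo (0:ℝ) 1, G q) - 1 / 2) := by
  rcases h.lt_or_eq with h | rfl
  · rw [← setIntegral_ltIndicator_unitSquare, ← integral_sub hG
      integrableOn_ltIndicator_Ioo_prod_Ioo,
      ← setIntegral_comp_rescale h.le]
    simp only [ltIndicator_rescale h]
  · simp only [Ioo_self, empty_prod, Measure.restrict_empty, integral_zero_measure, sub_self]
    ring

end Rescale

namespace IsOrdinalSum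

variable {n : ℕ} {a b : Fin n → ℝ} {Bk : Fin n → ℝ → ℝ → ℝ} {B : ℝ → ℝ → ℝ}

theorem hasDerivAt_of_mem (hB : IsOrdinalSum a b Bk B) {k : Fin n} {p : ℝ × ℝ}
    (hp : p ∈ Ioo (a k) (b k) ×ˢ Ioo (a k) (b k)) {c : ℝ}
    (hc : HasDerivAt (fun s => Bk k s (rescale (a k) (b k) p).2) c
      (rescale (a k) (b k) p).1) :
    HasDerivAt (fun s => B s p.2) c p.1 := by
  obtain ⟨-, -, hsquare, -⟩ := hB
  have hk : b k - a k ≠ 0 := (sub_pos.2 (hp.1.1.trans hp.1.2)).ne'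
  have hscaled : HasDerivAt (fun s => a k + (b k - a k) *
      Bk k ((s - a k) / (b k - a k)) ((p.2 - a k) / (b k - a k))) c p.1 := by
    have hdiv := ((hasDerivAt_id p.1).sub_const (a k)).div_const (b k - a k)
    have := ((hc.comp p.1 hdiv).const_mul (b k - a k)).const_add (a k)
    exact this.congr_deriv (by field_simp)
  refine hscaled.congr_of_eventuallyEq ?_
  filter_upwards [Ioo_mem_nhds hp.1.1 hp.1.2] with s hs
  exact hsquare k s (Ioo_subset_Icc_self hs) p.2 (Ioo_subset_Icc_self hp.2)

theorem eventuallyEq_min (hB : IsOrdinalSum a b Bk B) {u v : ℝ} (hu : u ∈ Ioo (0:ℝ) 1)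
    (hv : v ∈ Icc (0:ℝ) 1) (h : ∀ k, ¬(u ∈ Icc (a k) (b k) ∧ v ∈ Icc (a k) (b k))) :
    (fun s => B s v) =ᶠ[𝓝 u] fun s => min s v := by
  obtain ⟨-, -, -, hoff⟩ := hB
  have hfar : ∀ᶠ s in 𝓝 u, ∀ k, ¬(s ∈ Icc (a k) (b k) ∧ v ∈ Icc (a k) (b k)) := by
    refine eventually_all.2 fun k => ?_
    by_cases hvk : v ∈ Icc (a k) (b k)
    · filter_upwards [isClosed_Icc.isOpen_compl.mem_nhds fun huk => h k ⟨huk, hvk⟩] with s hs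
      exact fun hsk => hs hsk.1
    · exact Eventually.of_forall fun s hsk => hvk hsk.2
  filter_upwards [hfar, Icc_mem_nhds hu.1 hu.2] with s hs hs01
  exact hoff s hs01 v hv hs

theorem ae_sq_deriv_eq (hB : IsOrdinalSum a b Bk B) {g : ℝ → ℝ → ℝ} {gk : Fin n → ℝ → ℝ → ℝ}
    (hg : ∀ᵐ p ∂(volume.restrict (Ioo (0:ℝ) 1 ×ˢ Ioo (0:ℝ) 1)),
      HasDerivAt (fun s => B s p.2) (g p.1 p.2) p.1)
    (hgk : ∀ k, ∀ᵐ p ∂(volume.restrict (Ioo (a k) (b k) ×ˢ Ioo (a k) (b k))),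
      HasDerivAt (fun s => Bk k s (rescale (a k) (b k) p).2)
        (gk k (rescale (a k) (b k) p).1 (rescale (a k) (b k) p).2) (rescale (a k) (b k) p).1) :
    ∀ᵐ p ∂(volume.restrict (Ioo (0:ℝ) 1 ×ˢ Ioo (0:ℝ) 1)), g p.1 p.2 ^ 2 = ltIndicator p +
      ∑ k, (Ioo (a k) (b k) ×ˢ Ioo (a k) (b k)).indicator (fun p =>
        gk k (rescale (a k) (b k) p).1 (rescale (a k) (b k) p).2 ^ 2 - ltIndicator p) p := by
  have hedges : ∀ᵐ p : ℝ × ℝ, ∀ k, p ∈ Icc (a k) (b k) ×ˢ Icc (a k) (b k) →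
      p ∈ Ioo (a k) (b k) ×ˢ Ioo (a k) (b k) :=
    ae_all_iff.2 fun k =>
      (eventuallyEq_set.1 Ioo_prod_Ioo_ae_eq_Icc_prod_Icc).mono fun _ hp => hp.2
  filter_upwards [hg, ae_restrict_mem (measurableSet_Ioo.prod measurableSet_Ioo),
    ae_restrict_of_ae ae_fst_ne_snd, ae_restrict_of_ae hedges,
    ae_restrict_of_ae (ae_all_iff.2 fun k => ae_imp_of_ae_restrict (hgk k))]
    with p hgp hpU hne hpedges hpk
  by_cases hin : ∃ k, p ∈ Ioo (a k) (b k) ×ˢ Ioo (a k) (b k)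
  · obtain ⟨k, hk⟩ := hin
    rw [Finset.sum_eq_single_of_mem k (Finset.mem_univ k), indicator_of_mem hk,
      hgp.unique (hB.hasDerivAt_of_mem hk (hpk k hk))]
    · ring
    · exact fun j _ hjk => indicator_of_notMem (fun hj => disjoint_left.1 (hB.2.1 hjk) hj.1 hk.1) _
  · push Not at hin
    have hmin := hB.eventuallyEq_min hpU.1 (Ioo_subset_Icc_self hpU.2)
      fun k hk => hin k (hpedges k hk)
    rw [Finset.sum_eq_zero fun k _ => indicator_of_notMem (hin k) _, add_zero,
      hgp.unique ((hasDerivAt_min_ltIndicator hne).congr_of_eventuallyEq hmin)]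
    simp [ltIndicator, indicator]

theorem integral_sq_deriv_eq (hB : IsOrdinalSum a b Bk B) {g : ℝ → ℝ → ℝ} {gk : Fin n → ℝ → ℝ → ℝ}
    (hg : ∀ᵐ p ∂(volume.restrict (Ioo (0:ℝ) 1 ×ˢ Ioo (0:ℝ) 1)),
      HasDerivAt (fun s => B s p.2) (g p.1 p.2) p.1)
    (hgk : ∀ k, ∀ᵐ p ∂(volume.restrict (Ioo (0:ℝ) 1 ×ˢ Ioo (0:ℝ) 1)),
      HasDerivAt (fun s => Bk k s p.2) (gk k p.1 p.2) p.1)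
    (hgk_int : ∀ k,
      IntegrableOn (fun p : ℝ × ℝ => gk k p.1 p.2 ^ 2) (Ioo (0:ℝ) 1 ×ˢ Ioo (0:ℝ) 1)) :
    ∫ p in Ioo (0:ℝ) 1 ×ˢ Ioo (0:ℝ) 1, g p.1 p.2 ^ 2 = 1 / 2 + ∑ k, (b k - a k) ^ 2 *
      ((∫ p in Ioo (0:ℝ) 1 ×ˢ Ioo (0:ℝ) 1, gk k p.1 p.2 ^ 2) - 1 / 2) := by
  have hab k : a k ≤ b k := (hB.1 k).2.1
  have hsub k : Ioo (a k) (b k) ×ˢ Ioo (a k) (b k) ⊆ Ioo (0:ℝ) 1 ×ˢ Ioo (0:ℝ) 1 := by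
    have : Ioo (a k) (b k) ⊆ Ioo 0 1 := Ioo_subset_Ioo (hB.1 k).1 (hB.1 k).2.2
    exact prod_mono this this
  have hterm_int k : Integrable ((Ioo (a k) (b k) ×ˢ Ioo (a k) (b k)).indicator fun p =>
      gk k (rescale (a k) (b k) p).1 (rescale (a k) (b k) p).2 ^ 2 - ltIndicator p)
      (volume.restrict (Ioo (0:ℝ) 1 ×ˢ Ioo (0:ℝ) 1)) :=
    (((hgk_int k).comp_rescale (hab k)).sub integrableOn_ltIndicator_Ioo_prod_Ioo
      |>.integrable_indicator (measurableSet_Ioo.prod measurableSet_Ioo)).integrableOn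
  rw [integral_congr_ae (hB.ae_sq_deriv_eq hg fun k => ae_restrict_rescale (hab k) (hgk k)),
    integral_add integrableOn_ltIndicator_Ioo_prod_Ioo
      (integrable_finsetSum _ fun k _ => hterm_int k),
    integral_finsetSum _ fun k _ => hterm_int k, setIntegral_ltIndicator_unitSquare]
  congr 1
  refine Finset.sum_congr rfl fun k _ => ?_
  rw [setIntegral_indicator (measurableSet_Ioo.prod measurableSet_Ioo),
    inter_eq_right.2 (hsub k), setIntegral_comp_rescale_sub_ltIndicator (hab k) (hgk_int k)]

end IsOrdinalSum

theorem chatterjeeXi_ordinalSum_general {n : ℕ} (a b : Fin n → ℝ) (Bk : Fin n → ℝ → ℝ → ℝ)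
    (B : ℝ → ℝ → ℝ) (hBk : ∀ k, IsCopula (Bk k)) (hB : IsOrdinalSum a b Bk B)
    (g : ℝ → ℝ → ℝ) (gk : Fin n → ℝ → ℝ → ℝ)
    (hgkm : ∀ k, Measurable fun p : ℝ × ℝ => gk k p.1 p.2)
    (hg : ∀ᵐ p ∂(volume.restrict (Icc (0:ℝ) 1 ×ˢ Icc (0:ℝ) 1)),
      HasDerivAt (fun s => B s p.2) (g p.1 p.2) p.1)
    (hgk : ∀ k, ∀ᵐ p ∂(volume.restrict (Icc (0:ℝ) 1 ×ˢ Icc (0:ℝ) 1)),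
      HasDerivAt (fun s => Bk k s p.2) (gk k p.1 p.2) p.1) :
    6 * (∫ p in Icc (0:ℝ) 1 ×ˢ Icc (0:ℝ) 1, (g p.1 p.2) ^ 2) - 2 =
      1 - ∑ k, (b k - a k) ^ 2 *
        (3 - 6 * ∫ p in Icc (0:ℝ) 1 ×ˢ Icc (0:ℝ) 1, (gk k p.1 p.2) ^ 2) := by
  rw [← Measure.restrict_congr_set Ioo_prod_Ioo_ae_eq_Icc_prod_Icc] at hg hgk ⊢
  rw [hB.integral_sq_deriv_eq hg hgk fun k =>
    (hBk k).integrableOn_sq_of_hasDerivAt (hgkm k) (hgk k)]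
  simp only [show ∀ x y : ℝ, x * (3 - 6 * y) = -6 * (x * (y - 1 / 2)) from fun x y => by ring,
    ← Finset.mul_sum]
  ring

/-- Chatterjee's xi of an ordinal sum:
ξ(B) = 1 − Σ_k (b_k − a_k)² (1 − ξ(B_k)), where the xi's are expressed through
(almost everywhere) first-variable partial derivatives g, g_k. -/
theorem chatterjeeXi_ordinalSum {n : ℕ} (a b : Fin n → ℝ) (Bk : Fin n → ℝ → ℝ → ℝ)
    (B : ℝ → ℝ → ℝ) (hBk : ∀ k, IsCopula (Bk k)) (hB : IsOrdinalSum a b Bk B)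
    (g : ℝ → ℝ → ℝ) (gk : Fin n → ℝ → ℝ → ℝ)
    (hgm : Measurable fun p : ℝ × ℝ => g p.1 p.2)
    (hgkm : ∀ k, Measurable fun p : ℝ × ℝ => gk k p.1 p.2)
    (hg : ∀ᵐ p ∂(volume.restrict (Icc (0:ℝ) 1 ×ˢ Icc (0:ℝ) 1)),
      HasDerivAt (fun s => B s p.2) (g p.1 p.2) p.1)
    (hgk : ∀ k, ∀ᵐ p ∂(volume.restrict (Icc (0:ℝ) 1 ×ˢ Icc (0:ℝ) 1)),
      HasDerivAt (fun s => Bk k s p.2) (gk k p.1 p.2) p.1) :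
    6 * (∫ p in Icc (0:ℝ) 1 ×ˢ Icc (0:ℝ) 1, (g p.1 p.2) ^ 2) - 2 =
      1 - ∑ k, (b k - a k) ^ 2 *
        (3 - 6 * ∫ p in Icc (0:ℝ) 1 ×ˢ Icc (0:ℝ) 1, (gk k p.1 p.2) ^ 2) :=
  chatterjeeXi_ordinalSum_general a b Bk B hBk hB g gk hgkm hg hgk
end
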